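/- Let R be a commutative ring, n ≥ 1, and let A₁, …, A_n be 2×2 matrices over R. Let M be the 2n×2n block matrix whose (i,1) block is A_i for i = 1, …, n, whose (i, i+1) block is the 2×2 identity for i = 1, …, n-1, and all of whose other 2×2 blocks are zero. Then the characteristic polynomial of M satisfies det(X·I_{2n} - M) = det(Xⁿ·I₂ - Σ_{i=1}^{n} X^{n-i}·A_i), as an identity in R[X]. -/

import Mathlib

/-!
Let `N = x • 1 - M` and `P = xⁿ • 1 - ∑ xⁿ⁻¹⁻ⁱ • Aᵢ`. Adding `x^(m-r)` times block row `r` to the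
last block row (`n = m + 1`) turns that row into `(P, 0, …, 0)`: this is Horner's scheme for `P`.
After cycling the block columns once, the matrix becomes block upper triangular with diagonal
blocks `P` and `(x • J - 1) ⊗ₖ 1`, where `J` is the lower shift. Both the sign of the cyclic
permutation and the determinant of the second block are `((-1) ^ m) ^ card ι`, so they cancel.
-/

open Polynomial
open scoped Kronecker

namespace Matrix

variable {R S ι : Type*} [CommRing R] [CommRing S]

theorem det_fromBlocks_of_add_mul_eq_zero {l o : Type*} [Fintype l] [DecidableEq l]
    [Fintype o] [DecidableEq o] (A : Matrix l l S) (B : Matrix l o S) (C : Matrix o l S)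
    (D : Matrix o o S) (V : Matrix l o S) (h : B + V * D = 0) :
    (fromBlocks A B C D).det = (A + V * C).det * D.det := by
  have hmul : fromBlocks 1 V 0 1 * fromBlocks A B C D = fromBlocks (A + V * C) 0 C D := by
    simp [fromBlocks_multiply, h]
  calc (fromBlocks A B C D).det = (fromBlocks 1 V 0 1 * fromBlocks A B C D).det := by
        simp [det_mul]
    _ = (A + V * C).det * D.det := by rw [hmul, det_fromBlocks_zero₁₂]

theorem det_subdiagonal_sub_one (x : S) (m : ℕ) :
    (of (fun i j : Fin m => if (i : ℕ) = j + 1 then x else 0) - 1).det = (-1) ^ m := by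
  rw [det_of_isLowerTriangular]
  · simp
  · intro i j hij
    have : (i : ℕ) < j := hij
    simp only [sub_apply, of_apply, one_apply]
    rw [if_neg (by omega), if_neg (by omega), sub_zero]

variable (ι) in
def finSuccProdEquiv (m : ℕ) : ι ⊕ Fin m × ι ≃ Fin (m + 1) × ι :=
  optionProdEquiv.symm.trans (Equiv.prodCongrLeft fun _ => finSuccEquivLast.symm)

@[simp]
theorem finSuccProdEquiv_inl (m : ℕ) (a : ι) :
    finSuccProdEquiv ι m (.inl a) = (Fin.last m, a) := by
  simp [finSuccProdEquiv]

@[simp]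
theorem finSuccProdEquiv_inr (m : ℕ) (p : Fin m × ι) :
    finSuccProdEquiv ι m (.inr p) = (p.1.castSucc, p.2) := by
  simp [finSuccProdEquiv, finSuccEquivLast_symm_some, Prod.map]

variable (ι) in
def rotateBlocks (m : ℕ) : Equiv.Perm (Fin (m + 1) × ι) :=
  Equiv.prodCongrLeft fun _ => finRotate (m + 1)

@[simp]
theorem rotateBlocks_apply (m : ℕ) (i : Fin (m + 1)) (a : ι) :
    rotateBlocks ι m (i, a) = (i + 1, a) := by
  simp [rotateBlocks, Equiv.prodCongrLeft_apply, finRotate_apply]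

variable (ι) in
/-- Rows: the last block row first, then the others; columns: block column `0` first, then the
others. -/
def rotateBlocksReindex {m : ℕ} (N : Matrix (Fin (m + 1) × ι) (Fin (m + 1) × ι) S) :
    Matrix (ι ⊕ Fin m × ι) (ι ⊕ Fin m × ι) S :=
  N.submatrix (finSuccProdEquiv ι m) ((finSuccProdEquiv ι m).trans (rotateBlocks ι m))

variable [DecidableEq ι]

def blockCompanion {n : ℕ} (A : Fin n → Matrix ι ι R) : Matrix (Fin n × ι) (Fin n × ι) R :=
  of fun p q => if (q.1 : ℕ) = 0 then A p.1 p.2 q.2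
    else if (q.1 : ℕ) = (p.1 : ℕ) + 1 then (1 : Matrix ι ι R) p.2 q.2 else 0

theorem blockCompanion_map {n : ℕ} (A : Fin n → Matrix ι ι R) (f : R →+* S) :
    (blockCompanion A).map f = blockCompanion fun i => (A i).map f := by
  ext p q
  simp only [blockCompanion, map_apply, of_apply, apply_ite f, map_zero, one_apply, map_one]

variable (ι) in
def hornerWeights (x : S) (m : ℕ) : Matrix ι (Fin m × ι) S :=
  of fun a p => if a = p.2 then x ^ (m - p.1) else 0

theorem sign_rotateBlocks [Fintype ι] (m : ℕ) :
    ((Equiv.Perm.sign (rotateBlocks ι m) : ℤ) : S) = ((-1) ^ m) ^ Fintype.card ι := by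
  simp [rotateBlocks, Equiv.Perm.sign_prodCongrLeft, sign_finRotate]

theorem det_rotateBlocksReindex [Fintype ι] {m : ℕ}
    (N : Matrix (Fin (m + 1) × ι) (Fin (m + 1) × ι) S) :
    (rotateBlocksReindex ι N).det = ((-1) ^ m) ^ Fintype.card ι * N.det := by
  change ((N.submatrix id (rotateBlocks ι m)).submatrix (finSuccProdEquiv ι m)
    (finSuccProdEquiv ι m)).det = _
  rw [det_submatrix_equiv_self, det_permute', sign_rotateBlocks]

theorem add_sum_hornerWeights_mul [Fintype ι] (x : S) {m : ℕ} (f : Fin (m + 1) → ι → S)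
    (a : ι) :
    f (Fin.last m) a + ∑ p : Fin m × ι, hornerWeights ι x m a p * f p.1.castSucc p.2 =
      ∑ r : Fin (m + 1), x ^ (m - r) * f r a := by
  simp [hornerWeights, Fintype.sum_prod_type, Fin.sum_univ_castSucc, add_comm]

theorem toBlocks₁₁_add_hornerWeights_mul_toBlocks₂₁_apply [Fintype ι] (x : S) {m : ℕ}
    (N : Matrix (Fin (m + 1) × ι) (Fin (m + 1) × ι) S) (a b : ι) :
    ((rotateBlocksReindex ι N).toBlocks₁₁ +
        hornerWeights ι x m * (rotateBlocksReindex ι N).toBlocks₂₁) a b =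
      ∑ r : Fin (m + 1), x ^ (m - r) * N (r, a) (0, b) := by
  simpa [rotateBlocksReindex, toBlocks₁₁, toBlocks₂₁, mul_apply] using
    add_sum_hornerWeights_mul x (fun r c => N (r, c) (0, b)) a

theorem toBlocks₁₂_add_hornerWeights_mul_toBlocks₂₂_apply [Fintype ι] (x : S) {m : ℕ}
    (N : Matrix (Fin (m + 1) × ι) (Fin (m + 1) × ι) S) (a : ι) (j : Fin m) (b : ι) :
    ((rotateBlocksReindex ι N).toBlocks₁₂ +
        hornerWeights ι x m * (rotateBlocksReindex ι N).toBlocks₂₂) a (j, b) =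
      ∑ r : Fin (m + 1), x ^ (m - r) * N (r, a) (j.succ, b) := by
  simpa [rotateBlocksReindex, toBlocks₁₂, toBlocks₂₂, mul_apply] using
    add_sum_hornerWeights_mul x (fun r c => N (r, c) (j.succ, b)) a

theorem sum_pow_mul_smul_one_sub_blockCompanion_apply {m : ℕ} (x : S)
    (A : Fin (m + 1) → Matrix ι ι S) (a b : ι) (q : Fin (m + 1)) :
    ∑ r : Fin (m + 1), x ^ (m - r) * (x • 1 - blockCompanion A) (r, a) (q, b) =
      if q = 0 then (x ^ (m + 1) • 1 - ∑ i : Fin (m + 1), x ^ (m - (i : ℕ)) • A i) a b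
      else 0 := by
  cases q using Fin.cases with
  | zero =>
    by_cases hab : a = b <;>
      simp [blockCompanion, one_apply, mul_sub, Finset.sum_sub_distrib, sum_apply, pow_succ, hab]
  | succ j =>
    have hexp : m - (j + 1) + 1 = m - j := by omega
    have hcoe (r : Fin (m + 1)) : (j : ℕ) = r ↔ j.castSucc = r := by simp [Fin.ext_iff]
    by_cases hab : a = b <;>
      simp [blockCompanion, one_apply, mul_sub, Finset.sum_sub_distrib, hab, hcoe, ← pow_succ,
        hexp]

theorem toBlocks₂₂_rotateBlocksReindex_smul_one_sub_blockCompanion {m : ℕ} (x : S)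
    (A : Fin (m + 1) → Matrix ι ι S) :
    (rotateBlocksReindex ι (x • 1 - blockCompanion A)).toBlocks₂₂ =
      (of (fun i j : Fin m => if (i : ℕ) = j + 1 then x else 0) - 1) ⊗ₖ 1 := by
  ext ⟨i, a⟩ ⟨j, b⟩
  have hsucc : i.castSucc = j.succ ↔ (i : ℕ) = j + 1 := by simp [Fin.ext_iff]
  have hdiag : (j : ℕ) = i ↔ i = j := by simp [Fin.ext_iff, eq_comm]
  by_cases hab : a = b <;>
    simp [rotateBlocksReindex, toBlocks₂₂, blockCompanion, one_apply, hsucc, hdiag, hab]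

theorem det_smul_one_sub_blockCompanion [Fintype ι] {n : ℕ} (x : S)
    (A : Fin n → Matrix ι ι S) :
    (x • 1 - blockCompanion A).det =
      (x ^ n • 1 - ∑ i : Fin n, x ^ (n - 1 - (i : ℕ)) • A i).det := by
  cases n with
  | zero => simp
  | succ m =>
    set N := x • (1 : Matrix (Fin (m + 1) × ι) (Fin (m + 1) × ι) S) - blockCompanion A
    set P := x ^ (m + 1) • (1 : Matrix ι ι S) - ∑ i : Fin (m + 1), x ^ (m - (i : ℕ)) • A i
    set ε : S := ((-1) ^ m) ^ Fintype.card ι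
    have hε : ε * ε = 1 := by rw [← mul_pow, ← mul_pow, neg_one_mul, neg_neg, one_pow, one_pow]
    set N' := rotateBlocksReindex ι N
    have hlast : N'.toBlocks₁₁ + hornerWeights ι x m * N'.toBlocks₂₁ = P := by
      ext a b
      rw [toBlocks₁₁_add_hornerWeights_mul_toBlocks₂₁_apply,
        sum_pow_mul_smul_one_sub_blockCompanion_apply, if_pos rfl]
    have hzero : N'.toBlocks₁₂ + hornerWeights ι x m * N'.toBlocks₂₂ = 0 := by
      ext a ⟨j, b⟩
      rw [toBlocks₁₂_add_hornerWeights_mul_toBlocks₂₂_apply,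
        sum_pow_mul_smul_one_sub_blockCompanion_apply, if_neg (Fin.succ_ne_zero j), zero_apply]
    have hdet : N'.det = P.det * ε := by
      rw [← fromBlocks_toBlocks N',
        det_fromBlocks_of_add_mul_eq_zero _ _ _ _ _ hzero, hlast,
        toBlocks₂₂_rotateBlocksReindex_smul_one_sub_blockCompanion, det_kronecker,
        det_subdiagonal_sub_one, det_one, one_pow, mul_one]
    rw [det_rotateBlocksReindex] at hdet
    simp only [Nat.add_sub_cancel]
    calc N.det = ε * (ε * N.det) := by rw [← mul_assoc, hε, one_mul]
      _ = P.det := by rw [hdet, mul_comm, mul_assoc, hε, mul_one]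

end Matrix

theorem stmt_16_general {R : Type*} [CommRing R] (n : ℕ)
    (A : Fin n → Matrix (Fin 2) (Fin 2) R)
    (M : Matrix (Fin n × Fin 2) (Fin n × Fin 2) R)
    (hM : ∀ p q : Fin n × Fin 2,
      M p q = if (q.1 : ℕ) = 0 then A p.1 p.2 q.2
        else if (q.1 : ℕ) = (p.1 : ℕ) + 1 then (1 : Matrix (Fin 2) (Fin 2) R) p.2 q.2
        else 0) :
    Matrix.det
        ((X : R[X]) • (1 : Matrix (Fin n × Fin 2) (Fin n × Fin 2) R[X]) - M.map C) =
      Matrix.det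
        ((X ^ n : R[X]) • (1 : Matrix (Fin 2) (Fin 2) R[X]) -
          ∑ i : Fin n, (X ^ (n - 1 - (i : ℕ)) : R[X]) • (A i).map C) := by
  obtain rfl : M = Matrix.blockCompanion A := Matrix.ext hM
  rw [Matrix.blockCompanion_map, Matrix.det_smul_one_sub_blockCompanion]

/-- The characteristic polynomial of the `2n×2n` block-companion matrix with
first block column `A₁, …, Aₙ` and identity blocks on the block superdiagonal
equals `det(Xⁿ·I₂ - Σ X^{n-i}·Aᵢ)`. -/
theorem stmt_16 {R : Type*} [CommRing R] (n : ℕ) (hn : 1 ≤ n)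
    (A : Fin n → Matrix (Fin 2) (Fin 2) R)
    (M : Matrix (Fin n × Fin 2) (Fin n × Fin 2) R)
    (hM : ∀ p q : Fin n × Fin 2,
      M p q = if (q.1 : ℕ) = 0 then A p.1 p.2 q.2
        else if (q.1 : ℕ) = (p.1 : ℕ) + 1 then (1 : Matrix (Fin 2) (Fin 2) R) p.2 q.2
        else 0) :
    Matrix.det
        ((X : R[X]) • (1 : Matrix (Fin n × Fin 2) (Fin n × Fin 2) R[X]) - M.map C) =
      Matrix.det
        ((X ^ n : R[X]) • (1 : Matrix (Fin 2) (Fin 2) R[X]) -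
          ∑ i : Fin n, (X ^ (n - 1 - (i : ℕ)) : R[X]) • (A i).map C) :=
  stmt_16_general n A M hM
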